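/- arXiv:1602.02360 — 3 statements merged into one kernel-verified Lean document; each statement's English description precedes it below -/
import Mathlib

section
/- Let A be a finite subset of a field F, let X ⊆ (A - A) \ {0} with X = -X, let σ_X(A) = Σ_{x ∈ X} |A ∩ (A + x)|, let R_X[A] = {(a₂-a)/(a₁-a) : a, a₁, a₂ ∈ A, a₁ - a ∈ X}, and let T(A) = Σ_λ (Σ_x |A ∩ (A+x) ∩ (A+λx)|)², where the inner sum is over nonzero x and the outer over all λ ∈ F. Then |A|² · σ_X(A)² ≤ |R_X[A]| · T(A). -/
open Finset

variable {F : Type*} [Field F] [DecidableEq F]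

/-- The difference set A - A. -/
def diffSet (A : Finset F) : Finset F :=
  (A ×ˢ A).image (fun p => p.1 - p.2)

/-- R_X[A] = {(a₂ - a)/(a₁ - a) : a, a₁, a₂ ∈ A, a₁ - a ∈ X}. -/
def ratioSetX (A X : Finset F) : Finset F :=
  ((A ×ˢ A ×ˢ A).filter (fun p => p.2.1 - p.1 ∈ X)).image
    (fun p => (p.2.2 - p.1) / (p.2.1 - p.1))

/-- σ_X(A) = Σ_{x ∈ X} |A ∩ (A + x)|. -/
def sigmaX (A X : Finset F) : ℕ :=
  ∑ x ∈ X, (A ∩ A.image (fun a => a + x)).card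

/-- T(A) = Σ_λ (Σ_{x ≠ 0} |A ∩ (A+x) ∩ (A+λx)|)². -/
noncomputable def collinearT (A : Finset F) : ℝ :=
  ∑ᶠ l : F, (∑ᶠ x : F, if x ≠ 0 then
    ((A ∩ A.image (fun a => a + x) ∩ A.image (fun a => a + l * x)).card : ℝ) else 0) ^ 2

lemma mem_diffSet_of {A : Finset F} {a b : F} (ha : a ∈ A) (hb : b ∈ A) :
    a - b ∈ diffSet A := by
  simp only [diffSet, mem_image, mem_product]
  exact ⟨(a, b), ⟨ha, hb⟩, rfl⟩

theorem stmt_6 (A : Finset F) (hA : 1 < A.card) (X : Finset F)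
    (hX : X ⊆ (diffSet A).erase 0) (hsym : ∀ x ∈ X, -x ∈ X) :
    (A.card : ℝ) ^ 2 * (sigmaX A X : ℝ) ^ 2 ≤ ((ratioSetX A X).card : ℝ) * collinearT A := by
  classical
  set D : Finset F := (diffSet A).erase 0 with hD
  set R : Finset F := ratioSetX A X with hR
  set c : F → F → ℕ :=
    fun l x => (A ∩ A.image (fun a => a + x) ∩ A.image (fun a => a + l * x)).card with hc
  set f : F → ℝ := fun l => ∑ x ∈ X, (c l x : ℝ) with hf
  set g : F → ℝ := fun l => ∑ x ∈ D, (c l x : ℝ) with hg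
  set S : Finset F := (D ×ˢ diffSet A).image (fun p => p.2 / p.1) with hS
  -- membership facts
  have hmem : ∀ (b x : F), b ∈ A.image (fun a => a + x) ↔ b - x ∈ A := by
    intro b x
    simp only [mem_image]
    constructor
    · rintro ⟨a, ha, rfl⟩; simpa using ha
    · intro h; exact ⟨b - x, h, by ring⟩
  have hxne : ∀ x ∈ D, x ≠ 0 := fun x hx => (mem_erase.mp hx).1
  -- nonzero c implies l*x ∈ diffSet A (and x ∈ diffSet A)
  have hcne : ∀ l x, c l x ≠ 0 → x ∈ diffSet A ∧ l * x ∈ diffSet A := by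
    intro l x h
    obtain ⟨b, hb⟩ := card_ne_zero.mp h
    simp only [mem_inter, hmem] at hb
    exact ⟨by simpa using mem_diffSet_of hb.1.1 hb.1.2,
      by simpa using mem_diffSet_of hb.1.1 hb.2⟩
  -- Step 1: collinearT A = ∑ l ∈ S, (g l)^2
  have hinner : ∀ l : F, (∑ᶠ x : F, if x ≠ 0 then (c l x : ℝ) else 0) = g l := by
    intro l
    rw [finsum_eq_finset_sum_of_support_subset _ (s := D)]
    · refine Finset.sum_congr rfl fun x hx => if_pos (hxne x hx)
    · intro x hx
      rw [Function.mem_support] at hx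
      by_cases hx0 : x = 0
      · simp [hx0] at hx
      · have hxc : (c l x : ℝ) ≠ 0 := by simpa [hx0] using hx
        have := (hcne l x (by exact_mod_cast hxc)).1
        exact Finset.mem_coe.mpr (mem_erase.mpr ⟨hx0, this⟩)
  have hT : collinearT A = ∑ l ∈ S, (g l) ^ 2 := by
    rw [collinearT]
    rw [finsum_eq_finset_sum_of_support_subset _ (s := S)]
    · exact Finset.sum_congr rfl fun l _ => by rw [hinner l]
    · intro l hl
      simp only [Function.mem_support] at hl
      rw [hinner l] at hl
      have hgl : g l ≠ 0 := fun h => hl (by rw [h]; ring)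
      have : ∃ x ∈ D, (c l x : ℝ) ≠ 0 := by
        by_contra h
        push_neg at h
        exact hgl (Finset.sum_eq_zero h)
      obtain ⟨x, hxD, hcx⟩ := this
      have hlx := (hcne l x (by exact_mod_cast hcx)).2
      refine Finset.mem_coe.mpr ?_
      simp only [hS, mem_image, mem_product]
      exact ⟨(x, l * x), ⟨hxD, hlx⟩, mul_div_cancel_right₀ _ (hxne x hxD)⟩
  -- Step 2: |A| * σ_X(A) ≤ ∑ l ∈ R, f l
  have hstep2 : (A.card : ℝ) * (sigmaX A X : ℝ) ≤ ∑ l ∈ R, f l := by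
    have key : ∀ x ∈ X, ∀ b ∈ A ∩ A.image (fun a => a + x),
        (A.card : ℝ) ≤ ∑ l ∈ R, (if b ∈ A.image (fun a => a + l * x) then (1:ℝ) else 0) := by
      intro x hxX b hb
      have hx0 : x ≠ 0 := hxne x (hX hxX)
      simp only [mem_inter, hmem] at hb
      obtain ⟨hbA, hbxA⟩ := hb
      rw [Finset.sum_boole]
      have himg : A.image (fun cc => (b - cc) / x) ⊆
          R.filter (fun l => b ∈ A.image (fun a => a + l * x)) := by
        intro l hl
        simp only [mem_image] at hl
        obtain ⟨cc, hcc, rfl⟩ := hl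
        refine mem_filter.mpr ⟨?_, ?_⟩
        · simp only [hR, ratioSetX, mem_image, mem_filter, mem_product]
          refine ⟨(b, b - x, cc), ⟨⟨hbA, hbxA, hcc⟩, ?_⟩, ?_⟩
          · simpa using hsym x hxX
          · show (cc - b) / (b - x - b) = (b - cc) / x
            rw [show b - x - b = -x by ring, show cc - b = -(b - cc) by ring,
              neg_div_neg_eq]
        · rw [hmem]
          have : (b - cc) / x * x = b - cc := div_mul_cancel₀ _ hx0
          rw [this]
          simpa using hcc
      have hinj : (A.image (fun cc => (b - cc) / x)).card = A.card := by
        apply Finset.card_image_of_injOn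
        intro u _ v _ huv
        have h2 : b - u = b - v := by
          have := congrArg (fun t => t * x) huv
          simpa [div_mul_cancel₀ _ hx0] using this
        linear_combination -h2
      calc (A.card : ℝ) = ((A.image (fun cc => (b - cc) / x)).card : ℝ) := by rw [hinj]
        _ ≤ _ := by exact_mod_cast Nat.cast_le.mpr (Finset.card_le_card himg)
    -- sum it up
    have h1 : (A.card : ℝ) * (sigmaX A X : ℝ)
        = ∑ x ∈ X, ∑ b ∈ A ∩ A.image (fun a => a + x), (A.card : ℝ) := by
      rw [sigmaX]
      push_cast
      rw [Finset.mul_sum]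
      refine Finset.sum_congr rfl fun x _ => ?_
      rw [Finset.sum_const, nsmul_eq_mul, mul_comm]
    rw [h1]
    calc ∑ x ∈ X, ∑ b ∈ A ∩ A.image (fun a => a + x), (A.card : ℝ)
        ≤ ∑ x ∈ X, ∑ b ∈ A ∩ A.image (fun a => a + x),
            ∑ l ∈ R, (if b ∈ A.image (fun a => a + l * x) then (1:ℝ) else 0) := by
          refine Finset.sum_le_sum fun x hx => Finset.sum_le_sum fun b hb => key x hx b hb
      _ = ∑ x ∈ X, ∑ l ∈ R, ∑ b ∈ A ∩ A.image (fun a => a + x),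
            (if b ∈ A.image (fun a => a + l * x) then (1:ℝ) else 0) :=
          Finset.sum_congr rfl fun x _ => Finset.sum_comm
      _ = ∑ l ∈ R, ∑ x ∈ X, ∑ b ∈ A ∩ A.image (fun a => a + x),
            (if b ∈ A.image (fun a => a + l * x) then (1:ℝ) else 0) :=
          Finset.sum_comm
      _ = ∑ l ∈ R, f l := by
          refine Finset.sum_congr rfl fun l _ => Finset.sum_congr rfl fun x _ => ?_
          rw [Finset.sum_boole]
          simp only [hc]
          norm_cast
  -- Step 3 and 4
  have hf_nonneg : ∀ l, 0 ≤ f l := fun l => Finset.sum_nonneg fun x _ => Nat.cast_nonneg _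
  have hfg : ∀ l, f l ≤ g l := fun l =>
    Finset.sum_le_sum_of_subset_of_nonneg hX (fun x _ _ => Nat.cast_nonneg _)
  have hg_zero : ∀ l ∉ S, g l = 0 := by
    intro l hl
    apply Finset.sum_eq_zero
    intro x hxD
    by_contra h
    have hlx := (hcne l x (by exact_mod_cast h)).2
    exact hl (by
      simp only [hS, mem_image, mem_product]
      exact ⟨(x, l * x), ⟨hxD, hlx⟩, mul_div_cancel_right₀ _ (hxne x hxD)⟩)
  have hstep4 : ∑ l ∈ R, (f l) ^ 2 ≤ ∑ l ∈ S, (g l) ^ 2 := by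
    calc ∑ l ∈ R, (f l) ^ 2 ≤ ∑ l ∈ R ∪ S, (f l) ^ 2 :=
          Finset.sum_le_sum_of_subset_of_nonneg Finset.subset_union_left
            (fun l _ _ => sq_nonneg _)
      _ ≤ ∑ l ∈ R ∪ S, (g l) ^ 2 :=
          Finset.sum_le_sum fun l _ => pow_le_pow_left₀ (hf_nonneg l) (hfg l) 2
      _ = ∑ l ∈ S, (g l) ^ 2 := by
          refine (Finset.sum_subset Finset.subset_union_right fun l _ hl => ?_).symm
          rw [hg_zero l hl]; ring
  -- combine
  have hCS : (∑ l ∈ R, f l) ^ 2 ≤ (R.card : ℝ) * ∑ l ∈ R, (f l) ^ 2 :=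
    sq_sum_le_card_mul_sum_sq
  have hAs : (0:ℝ) ≤ (A.card : ℝ) * (sigmaX A X : ℝ) := mul_nonneg (Nat.cast_nonneg _) (Nat.cast_nonneg _)
  calc (A.card : ℝ) ^ 2 * (sigmaX A X : ℝ) ^ 2
      = ((A.card : ℝ) * (sigmaX A X : ℝ)) ^ 2 := by ring
    _ ≤ (∑ l ∈ R, f l) ^ 2 := by
        apply pow_le_pow_left₀ hAs hstep2
    _ ≤ (R.card : ℝ) * ∑ l ∈ R, (f l) ^ 2 := hCS
    _ ≤ (R.card : ℝ) * ∑ l ∈ S, (g l) ^ 2 := by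
        apply mul_le_mul_of_nonneg_left hstep4 (Nat.cast_nonneg _)
    _ = (R.card : ℝ) * collinearT A := by rw [hT]
end

section
/- Let A, B, G be finite sets in an abelian group and suppose for every finite set B' and every τ ≥ 1 the number of s with |A ∩ (B' + s)| ≥ τ is at most K|A||B'|²/τ³ (i.e. A is of Szemerédi–Trotter type with constant K). Then the number of s ∈ A - B with |A ∩ (B + s)| > 0 is at least c·|A||B|^{1/2}K^{-1/2} for some absolute constant c > 0. -/
/-! Write `r(s) = |A ∩ (B + s)|`, so that `∑_{s ∈ A - B} r(s) = |A||B|` and `r(s) > 0` on `A - B`.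
By the layer-cake formula the sum equals `∑_{t ≥ 1} #{s : r(s) ≥ t}`. Levels `t ≤ T` contribute at
most `T |A - B|`, and by the Szemerédi–Trotter hypothesis levels `t > T` contribute at most
`K|A||B|² ∑_{t > T} t⁻³ ≤ K|A||B|²/T²`. With `T ≈ 2√(K|B|)` the second part is at most `|A||B|/4`,
so `|A - B| ≥ |A||B|^{1/2} / (4 K^{1/2})`. -/

open Finset Pointwise

lemma sum_eq_sum_Ioc_card_filter_le {ι : Type*} (s : Finset ι) (f : ι → ℕ) {M : ℕ}
    (hf : ∀ i ∈ s, f i ≤ M) :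
    ∑ i ∈ s, f i = ∑ t ∈ Ioc 0 M, #{i ∈ s | t ≤ f i} := by
  have h : ∀ i ∈ s, f i = #{t ∈ Ioc 0 M | t ≤ f i} := fun i hi => by
    rw [show {t ∈ Ioc 0 M | t ≤ f i} = Ioc 0 (f i) by ext t; simp; have := hf i hi; omega,
      Nat.card_Ioc, Nat.sub_zero]
  simp_rw [sum_congr rfl h, card_filter]
  exact sum_comm

lemma sum_Ioc_inv_pow_three_le {T : ℕ} (hT : T ≠ 0) (M : ℕ) :
    ∑ t ∈ Ioc T M, ((t : ℝ) ^ 3)⁻¹ ≤ ((T : ℝ) ^ 2)⁻¹ := by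
  rcases le_or_gt T M with hTM | hMT
  · calc ∑ t ∈ Ioc T M, ((t : ℝ) ^ 3)⁻¹ ≤ ∑ t ∈ Ioc T M, (T : ℝ)⁻¹ * ((t : ℝ) ^ 2)⁻¹ := by
          refine sum_le_sum fun t ht => ?_
          have hTt : (T : ℝ) ≤ t := by exact_mod_cast (mem_Ioc.1 ht).1.le
          have hT0 : (0 : ℝ) < T := by exact_mod_cast Nat.pos_of_ne_zero hT
          rw [← mul_inv, pow_succ']
          exact inv_anti₀ (mul_pos hT0 (pow_pos (hT0.trans_le hTt) 2)) (by gcongr)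
      _ ≤ (T : ℝ)⁻¹ * ((T : ℝ)⁻¹ - (M : ℝ)⁻¹) := by
          rw [← mul_sum]; gcongr; exact sum_Ioc_inv_sq_le_sub hT hTM
      _ ≤ ((T : ℝ) ^ 2)⁻¹ := by
          rw [sq, mul_inv]; gcongr; exact sub_le_self _ (by positivity)
  · rw [Ioc_eq_empty_of_le hMT.le, sum_empty]; positivity

variable {G : Type*} [AddCommGroup G] [DecidableEq G]

lemma sum_card_inter_image_add (A B : Finset G) :
    ∑ s ∈ A - B, #(A ∩ B.image (· + s)) = #A * #B := by
  rw [← card_product, card_eq_sum_card_fiberwise (f := fun p : G × G => p.1 - p.2) (t := A - B)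
    fun p hp => sub_mem_sub (mem_product.1 hp).1 (mem_product.1 hp).2]
  refine sum_congr rfl fun s _ => card_nbij' (fun a => (a, a - s)) Prod.fst ?_ ?_ ?_ ?_
  · intro a ha
    simpa [sub_eq_add_neg] using ha
  · rintro ⟨a, b⟩ hab
    obtain ⟨⟨ha, hb⟩, rfl⟩ : (a ∈ A ∧ b ∈ B) ∧ a - b = s := by simpa using hab
    simpa [ha] using hb
  · intro a _; rfl
  · rintro ⟨a, b⟩ hab
    obtain ⟨-, rfl⟩ : (a ∈ A ∧ b ∈ B) ∧ a - b = s := by simpa using hab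
    simp

lemma card_inter_image_add_pos {A B : Finset G} {s : G} (hs : s ∈ A - B) :
    0 < #(A ∩ B.image (· + s)) := by
  obtain ⟨a, ha, b, hb, rfl⟩ := mem_sub.1 hs
  exact card_pos.2 ⟨a, mem_inter.2 ⟨ha, mem_image.2 ⟨b, hb, add_sub_cancel b a⟩⟩⟩

lemma card_inter_image_add_le (A B : Finset G) (s : G) : #(A ∩ B.image (· + s)) ≤ #B :=
  (card_le_card inter_subset_right).trans card_image_le

def IsSzTType (A : Finset G) (K : ℝ) : Prop :=
  ∀ (B' : Finset G) (τ : ℝ), 1 ≤ τ →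
    (#{s ∈ A - B' | τ ≤ (#(A ∩ B'.image (· + s)) : ℝ)} : ℝ) ≤ K * #A * (#B' : ℝ) ^ 2 / τ ^ 3

namespace IsSzTType

variable {A : Finset G} {K : ℝ}

lemma one_le (h : IsSzTType A K) (hA : A.Nonempty) : 1 ≤ K := by
  have hsingle : #{s ∈ A - {0} | (1 : ℝ) ≤ #(A ∩ ({0} : Finset G).image (· + s))} = #A := by
    simp only [sub_singleton, sub_zero, image_id', image_singleton, zero_add]
    rw [filter_true_of_mem fun s hs => by simp [inter_singleton_of_mem hs]]
  have := h {0} 1 le_rfl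
  rw [hsingle, card_singleton, Nat.cast_one, one_pow, one_pow, mul_one, div_one] at this
  exact (le_mul_iff_one_le_left (by exact_mod_cast hA.card_pos)).1 this

lemma card_mul_card_le (h : IsSzTType A K) (hK : 0 ≤ K) (B : Finset G) {T : ℕ} (hT : T ≠ 0) :
    (#A * #B : ℝ) ≤ T * #(A - B) + K * #A * #B ^ 2 / T ^ 2 := by
  set M := max T #B
  set n : ℕ → ℝ := fun t => #{s ∈ A - B | t ≤ #(A ∩ B.image (· + s))}
  have hlayer : (#A * #B : ℝ) = ∑ t ∈ Ioc 0 T, n t + ∑ t ∈ Ioc T M, n t := by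
    rw [sum_Ioc_consecutive _ (Nat.zero_le T) (le_max_left _ _), ← Nat.cast_mul,
      ← sum_card_inter_image_add, sum_eq_sum_Ioc_card_filter_le _ _ fun s _ =>
        (card_inter_image_add_le A B s).trans (le_max_right T #B), Nat.cast_sum]
  have hlow : ∑ t ∈ Ioc 0 T, n t ≤ T * #(A - B) := by
    calc ∑ t ∈ Ioc 0 T, n t ≤ ∑ t ∈ Ioc 0 T, (#(A - B) : ℝ) :=
          sum_le_sum fun t _ => Nat.cast_le.2 (card_filter_le _ _)
      _ = T * #(A - B) := by simp
  have hhigh : ∑ t ∈ Ioc T M, n t ≤ K * #A * #B ^ 2 / T ^ 2 := by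
    calc ∑ t ∈ Ioc T M, n t ≤ ∑ t ∈ Ioc T M, K * #A * #B ^ 2 * ((t : ℝ) ^ 3)⁻¹ := by
          refine sum_le_sum fun t ht => ?_
          have := h B t (by exact_mod_cast (Nat.pos_of_ne_zero hT).trans (mem_Ioc.1 ht).1)
          simpa [n, div_eq_mul_inv] using this
      _ ≤ K * #A * #B ^ 2 * ((T : ℝ) ^ 2)⁻¹ := by
          rw [← mul_sum]
          gcongr
          exact sum_Ioc_inv_pow_three_le hT M
      _ = K * #A * #B ^ 2 / T ^ 2 := div_eq_mul_inv .. |>.symm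
  linarith

lemma card_mul_sqrt_le (h : IsSzTType A K) (hA : A.Nonempty) (B : Finset G) :
    #A * √(#B : ℝ) ≤ 4 * √K * #(A - B) := by
  rcases B.eq_empty_or_nonempty with rfl | hB
  · simp
  have hK := h.one_le hA
  have hB1 : (1 : ℝ) ≤ #B := by exact_mod_cast hB.card_pos
  set x := √(K * #B) with hx
  have hx1 : 1 ≤ x := Real.one_le_sqrt.2 (one_le_mul_of_one_le_of_one_le hK hB1)
  set T := ⌈2 * x⌉₊
  have hT0 : T ≠ 0 := by positivity
  have hxT : 2 * x ≤ T := Nat.le_ceil _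
  have hTx : (T : ℝ) ≤ 3 * x := by linarith [Nat.ceil_lt_add_one (by positivity : 0 ≤ 2 * x)]
  have htail : K * #A * #B ^ 2 / T ^ 2 ≤ #A * #B / 4 := by
    have hKB : 4 * (K * #B) ≤ (T : ℝ) ^ 2 := by
      calc 4 * (K * #B) = (2 * x) ^ 2 := by rw [mul_pow, Real.sq_sqrt (by positivity)]; ring
        _ ≤ (T : ℝ) ^ 2 := by gcongr
    rw [div_le_iff₀ (by positivity)]
    calc K * #A * #B ^ 2 = #A * #B / 4 * (4 * (K * #B)) := by ring
      _ ≤ #A * #B / 4 * T ^ 2 := by gcongr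
  have hmain : (#A * #B : ℝ) ≤ 4 * x * #(A - B) := by
    have hlow : (T : ℝ) * #(A - B) ≤ 3 * x * #(A - B) := by gcongr
    linarith [h.card_mul_card_le (by linarith) B hT0]
  refine le_of_mul_le_mul_right ?_ (Real.sqrt_pos.2 (by linarith : (0 : ℝ) < #B))
  calc #A * √(#B : ℝ) * √(#B : ℝ) = #A * #B := by
        rw [mul_assoc, Real.mul_self_sqrt (by positivity)]
    _ ≤ 4 * x * #(A - B) := hmain
    _ = 4 * √K * #(A - B) * √(#B : ℝ) := by rw [hx, Real.sqrt_mul (by linarith)]; ring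

end IsSzTType

theorem stmt_8 :
    ∃ c : ℝ, 0 < c ∧
      ∀ (G : Type) [AddCommGroup G] [DecidableEq G] (A B : Finset G) (K : ℝ), 0 < K →
        (∀ (B' : Finset G) (τ : ℝ), 1 ≤ τ →
          (((A - B').filter
              (fun s => τ ≤ ((A ∩ B'.image (fun b => b + s)).card : ℝ))).card : ℝ) ≤
            K * A.card * (B'.card : ℝ) ^ 2 / τ ^ 3) →
        c * A.card * (B.card : ℝ) ^ ((1 : ℝ) / 2) * K ^ (-(1 : ℝ) / 2) ≤
          (((A - B).filter (fun s => 0 < (A ∩ B.image (fun b => b + s)).card)).card : ℝ) := by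
  refine ⟨1 / 4, by norm_num, fun G _ _ A B K hK hSzT => ?_⟩
  rcases A.eq_empty_or_nonempty with rfl | hA
  · simp
  have key := IsSzTType.card_mul_sqrt_le hSzT hA B
  rw [filter_true_of_mem fun s hs => card_inter_image_add_pos hs, ← Real.sqrt_eq_rpow, neg_div,
    Real.rpow_neg hK.le, ← Real.sqrt_eq_rpow, mul_inv_le_iff₀ (Real.sqrt_pos.2 hK)]
  linarith
end

section
/- Let A be a finite set of reals of Szemerédi–Trotter type with parameter K, meaning |{s : |A ∩ (B + s)| ≥ τ}| ≤ K|A||B|²/τ³ for all finite B ⊂ ℝ and all τ ≥ 1. Then the additive energy E(A,B) = Σ_s |A ∩ (B + s)|² satisfies E(A,B) ≪ K^{1/2}|A||B|^{3/2}. -/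
open Finset Pointwise

private lemma sq_eq_sum_range (n : ℕ) : n ^ 2 = ∑ t ∈ Finset.range n, (2 * t + 1) := by
  induction n with
  | zero => simp
  | succ n ih => rw [Finset.sum_range_succ, ← ih]; ring

private lemma tele_aux (m : ℕ) (hm : 1 ≤ m) :
    ∀ M, m ≤ M → ∑ t ∈ Finset.Ico m M, (1 : ℝ) / ((t : ℝ) + 1) ^ 2 ≤ 1 / (m : ℝ) - 1 / (M : ℝ) := by
  intro M
  induction M with
  | zero => omega
  | succ M ih =>
    intro h
    rcases eq_or_lt_of_le h with he | hlt
    · subst he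
      rw [Finset.Ico_self, Finset.sum_empty]
      simp
    · have hmM : m ≤ M := by omega
      have hM1 : (1:ℝ) ≤ (M:ℝ) := by exact_mod_cast hm.trans hmM
      rw [Finset.sum_Ico_succ_top hmM]
      have h1 : (1:ℝ)/((M:ℝ)+1)^2 ≤ 1/(M:ℝ) - 1/((M:ℝ)+1) := by
        rw [div_sub_div _ _ (by linarith) (by linarith), div_le_div_iff₀ (by positivity) (by positivity)]
        nlinarith
      have h2 := ih hmM
      push_cast
      linarith

private lemma tele (m M : ℕ) (hm : 1 ≤ m) :
    ∑ t ∈ Finset.Ico m M, (1 : ℝ) / ((t : ℝ) + 1) ^ 2 ≤ 1 / (m : ℝ) := by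
  rcases le_or_gt m M with h | h
  · have hM : (0:ℝ) < (M : ℝ) := by
      have : 1 ≤ M := hm.trans h
      exact_mod_cast Nat.pos_of_ne_zero (by omega)
    have h0 : (0:ℝ) ≤ 1 / (M:ℝ) := by positivity
    linarith [tele_aux m hm M h]
  · rw [Finset.Ico_eq_empty (by omega), Finset.sum_empty]
    positivity

private lemma alg_final (a x y : ℝ) (hx : 0 < x) (hy : 0 < y) :
    (x * y) * (2 * a * y ^ 2) + (2 * (x ^ 2 * a * (y ^ 2) ^ 2)) * (2 / (x * y))
      = 6 * x * a * y ^ 3 := by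
  field_simp
  ring

set_option maxHeartbeats 1000000 in
theorem stmt_9'
 (A B : Finset ℝ) (K : ℝ) (hK : 1 ≤ K)
        (hyp : ∀ (B' : Finset ℝ) (τ : ℝ), 1 ≤ τ →
          ({s : ℝ | τ ≤ ((A ∩ B'.image (fun b => b + s)).card : ℝ)}.ncard : ℝ) ≤
            K * A.card * (B'.card : ℝ) ^ 2 / τ ^ 3) (hBne : B.Nonempty) :
        (∑ s ∈ A - B, ((A ∩ B.image (fun b => b + s)).card : ℝ) ^ 2) ≤
          6 * K ^ ((1 : ℝ) / 2) * A.card * (B.card : ℝ) ^ ((3 : ℝ) / 2) := by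
  set r : ℝ → ℕ := fun s => (A ∩ B.image (fun b => b + s)).card with hr
  set N : ℕ → ℕ := fun n => ((A - B).filter (fun s => n ≤ r s)).card with hN
  set M : ℕ := B.card with hM
  have hM1 : 1 ≤ M := Finset.card_pos.mpr hBne
  -- sum of r over A - B
  have hsum_r : ∑ s ∈ A - B, r s = A.card * M := by
    calc ∑ s ∈ A - B, r s
        = ∑ s ∈ A - B, ∑ a ∈ A, if a - s ∈ B then 1 else 0 := by
          refine Finset.sum_congr rfl fun s _ => ?_
          have h1 : A ∩ B.image (fun b => b + s) = A.filter (fun a => a - s ∈ B) := by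
            ext a
            simp only [Finset.mem_inter, Finset.mem_image, Finset.mem_filter]
            constructor
            · rintro ⟨ha, b, hb, rfl⟩; simpa using ⟨ha, hb⟩
            · rintro ⟨ha, hb⟩; exact ⟨ha, a - s, hb, by ring⟩
          rw [hr]; simp only []
          rw [h1, Finset.card_filter]
      _ = ∑ a ∈ A, ∑ s ∈ A - B, if a - s ∈ B then 1 else 0 := Finset.sum_comm
      _ = ∑ a ∈ A, M := by
          refine Finset.sum_congr rfl fun a ha => ?_
          rw [← Finset.card_filter]
          have he : (A - B).filter (fun s => a - s ∈ B) = B.image (fun b => a - b) := by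
            ext s
            simp only [Finset.mem_filter, Finset.mem_image]
            constructor
            · rintro ⟨hs, hb⟩; exact ⟨a - s, hb, by ring⟩
            · rintro ⟨b, hb, rfl⟩
              exact ⟨Finset.sub_mem_sub ha hb, by simpa using hb⟩
          rw [he, Finset.card_image_of_injective _ sub_right_injective]
      _ = A.card * M := by rw [Finset.sum_const, smul_eq_mul]
  -- Markov
  have hMarkov : ∀ n : ℕ, (n : ℝ) * (N n : ℝ) ≤ (A.card : ℝ) * M := by
    intro n
    have h : n * N n ≤ A.card * M := by
      have h1 : N n • n ≤ ∑ s ∈ (A - B).filter (fun s => n ≤ r s), r s :=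
        Finset.card_nsmul_le_sum _ _ _ (fun x hx => (Finset.mem_filter.mp hx).2)
      have h2 : ∑ s ∈ (A - B).filter (fun s => n ≤ r s), r s ≤ ∑ s ∈ A - B, r s :=
        Finset.sum_le_sum_of_subset (Finset.filter_subset _ _)
      calc n * N n = N n • n := by rw [smul_eq_mul, mul_comm]
        _ ≤ _ := h1.trans (h2.trans_eq hsum_r)
    exact_mod_cast h
  -- SzT
  have hSzT : ∀ n : ℕ, 1 ≤ n → (N n : ℝ) ≤ K * A.card * (M:ℝ)^2 / (n:ℝ)^3 := by
    intro n hn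
    have hset : {s : ℝ | (n:ℝ) ≤ (r s : ℝ)} = ↑((A - B).filter (fun s => n ≤ r s)) := by
      ext s
      simp only [Set.mem_setOf_eq, Finset.mem_coe, Finset.mem_filter, Nat.cast_le]
      constructor
      · intro hs
        refine ⟨?_, hs⟩
        have hpos : 0 < r s := lt_of_lt_of_le hn hs
        obtain ⟨a, ha⟩ := Finset.card_pos.mp hpos
        obtain ⟨haA, hb⟩ : a ∈ A ∧ a + -s ∈ B := by
          simpa [Finset.mem_inter, Finset.mem_image] using ha
        have hsab : s = a - (a + -s) := by ring
        rw [hsab]; exact Finset.sub_mem_sub haA hb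
      · exact fun h => h.2
    have hh := hyp B (n:ℝ) (by exact_mod_cast hn)
    have : {s : ℝ | (n:ℝ) ≤ ((A ∩ B.image (fun b => b + s)).card : ℝ)}.ncard
        = ((A - B).filter (fun s => n ≤ r s)).card := by
      rw [show {s : ℝ | (n:ℝ) ≤ ((A ∩ B.image (fun b => b + s)).card : ℝ)}
            = {s : ℝ | (n:ℝ) ≤ (r s : ℝ)} from rfl, hset, Set.ncard_coe_finset]
    rw [this] at hh
    exact hh
  -- layer cake
  have hrM : ∀ s, r s ≤ M := fun s =>
    le_trans (Finset.card_le_card Finset.inter_subset_right) Finset.card_image_le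
  have hE : ∑ s ∈ A - B, (r s : ℝ)^2
      = ∑ t ∈ Finset.range M, (2*(t:ℝ)+1) * (N (t+1) : ℝ) := by
    have step1 : ∀ s ∈ A - B, (r s:ℝ)^2
        = ∑ t ∈ Finset.range M, (if t+1 ≤ r s then (2*(t:ℝ)+1) else 0) := by
      intro s _
      have hfe : (Finset.range M).filter (fun t => t+1 ≤ r s) = Finset.range (r s) := by
        ext t
        simp only [Finset.mem_filter, Finset.mem_range]
        constructor
        · intro h; omega
        · intro ht; exact ⟨lt_of_lt_of_le ht (hrM s), by omega⟩
      rw [← Finset.sum_filter, hfe]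
      have := sq_eq_sum_range (r s)
      have : ((r s : ℕ) : ℝ)^2 = ((∑ t ∈ Finset.range (r s), (2 * t + 1) : ℕ) : ℝ) := by
        exact_mod_cast congrArg (Nat.cast : ℕ → ℝ) this
      rw [this]
      push_cast
      rfl
    rw [Finset.sum_congr rfl step1, Finset.sum_comm]
    refine Finset.sum_congr rfl fun t _ => ?_
    rw [← Finset.sum_filter, Finset.sum_const, nsmul_eq_mul, mul_comm]
  set T : ℝ := Real.sqrt (K * M) with hT
  have hM0 : (1:ℝ) ≤ (M:ℝ) := by exact_mod_cast hM1
  have hK0 : (0:ℝ) ≤ K := by linarith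
  have hKM1 : (1:ℝ) ≤ K * M := by nlinarith
  have hT1 : (1:ℝ) ≤ T := by
    nlinarith [Real.sq_sqrt (by linarith : (0:ℝ) ≤ K * M), Real.sqrt_nonneg (K * (M:ℝ))]
  have hT0 : (0:ℝ) < T := lt_of_lt_of_le one_pos hT1
  set m' : ℕ := ⌊T⌋₊ with hm'
  have hm1 : 1 ≤ m' := Nat.le_floor (by exact_mod_cast hT1)
  have hm0 : (1:ℝ) ≤ (m':ℝ) := by exact_mod_cast hm1
  have hmT : (m':ℝ) ≤ T := Nat.floor_le hT0.le
  have hTm : T < (m':ℝ) + 1 := Nat.lt_floor_add_one T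
  have hP1 : ∑ t ∈ (Finset.range M).filter (fun t => t + 1 ≤ m'),
      (2*(t:ℝ)+1) * (N (t+1) : ℝ) ≤ T * (2 * (A.card:ℝ) * M) := by
    have hterm : ∀ t ∈ (Finset.range M).filter (fun t => t + 1 ≤ m'),
        (2*(t:ℝ)+1) * (N (t+1) : ℝ) ≤ 2 * (A.card:ℝ) * M := by
      intro t _
      have h1 := hMarkov (t+1)
      have h2 : (0:ℝ) ≤ (N (t+1) : ℝ) := Nat.cast_nonneg _
      push_cast at h1 ⊢
      nlinarith
    have hsum := Finset.sum_le_card_nsmul _ _ (2 * (A.card:ℝ) * M) hterm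
    have hc0 : (0:ℝ) ≤ 2 * (A.card:ℝ) * M := by positivity
    have hcard : (((Finset.range M).filter (fun t => t + 1 ≤ m')).card : ℝ) ≤ (m':ℝ) := by
      have : ((Finset.range M).filter (fun t => t + 1 ≤ m')) ⊆ Finset.range m' := by
        intro t ht
        simp only [Finset.mem_filter, Finset.mem_range] at ht ⊢
        omega
      have := Finset.card_le_card this
      rw [Finset.card_range] at this
      exact_mod_cast this
    calc ∑ t ∈ (Finset.range M).filter (fun t => t + 1 ≤ m'),
          (2*(t:ℝ)+1) * (N (t+1) : ℝ)
        ≤ (((Finset.range M).filter (fun t => t + 1 ≤ m')).card : ℝ)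
            * (2 * (A.card:ℝ) * M) := by
          rw [← nsmul_eq_mul]; exact hsum
      _ ≤ (m':ℝ) * (2 * (A.card:ℝ) * M) := by
          exact mul_le_mul_of_nonneg_right hcard hc0
      _ ≤ T * (2 * (A.card:ℝ) * M) := mul_le_mul_of_nonneg_right hmT hc0
  have hQ0 : (0:ℝ) ≤ K * (A.card:ℝ) * (M:ℝ)^2 := by positivity
  have hP2 : ∑ t ∈ (Finset.range M).filter (fun t => ¬(t + 1 ≤ m')),
      (2*(t:ℝ)+1) * (N (t+1) : ℝ)
      ≤ (2 * (K * (A.card:ℝ) * (M:ℝ)^2)) * (2 / T) := by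
    have hterm : ∀ t ∈ (Finset.range M).filter (fun t => ¬(t + 1 ≤ m')),
        (2*(t:ℝ)+1) * (N (t+1) : ℝ)
          ≤ (2 * (K * (A.card:ℝ) * (M:ℝ)^2)) * (1/((t:ℝ)+1)^2) := by
      intro t ht
      have hs := hSzT (t+1) (by omega)
      have ht1 : (0:ℝ) < (t:ℝ)+1 := by positivity
      have hN0 : (0:ℝ) ≤ (N (t+1) : ℝ) := Nat.cast_nonneg _
      push_cast at hs
      have hs' : (N (t+1) : ℝ) * ((t:ℝ)+1)^3 ≤ K * (A.card:ℝ) * (M:ℝ)^2 :=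
        (le_div_iff₀ (by positivity)).mp hs
      have key : (2*(t:ℝ)+1) * ((t:ℝ)+1)^2 ≤ 2 * ((t:ℝ)+1)^3 := by nlinarith
      rw [mul_one_div, le_div_iff₀ (by positivity)]
      nlinarith [mul_le_mul_of_nonneg_right key hN0]
    have hsub : (Finset.range M).filter (fun t => ¬(t + 1 ≤ m')) ⊆ Finset.Ico m' M := by
      intro t ht
      simp only [Finset.mem_filter, Finset.mem_range] at ht
      simp only [Finset.mem_Ico]
      omega
    calc ∑ t ∈ (Finset.range M).filter (fun t => ¬(t + 1 ≤ m')),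
          (2*(t:ℝ)+1) * (N (t+1) : ℝ)
        ≤ ∑ t ∈ (Finset.range M).filter (fun t => ¬(t + 1 ≤ m')),
            (2 * (K * (A.card:ℝ) * (M:ℝ)^2)) * (1/((t:ℝ)+1)^2) :=
          Finset.sum_le_sum hterm
      _ = (2 * (K * (A.card:ℝ) * (M:ℝ)^2)) *
            ∑ t ∈ (Finset.range M).filter (fun t => ¬(t + 1 ≤ m')),
              (1:ℝ)/((t:ℝ)+1)^2 := by rw [Finset.mul_sum]
      _ ≤ (2 * (K * (A.card:ℝ) * (M:ℝ)^2)) * (2 / T) := by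
          refine mul_le_mul_of_nonneg_left ?_ (by linarith)
          have h1 : ∑ t ∈ (Finset.range M).filter (fun t => ¬(t + 1 ≤ m')),
              (1:ℝ)/((t:ℝ)+1)^2 ≤ ∑ t ∈ Finset.Ico m' M, (1:ℝ)/((t:ℝ)+1)^2 :=
            Finset.sum_le_sum_of_subset_of_nonneg hsub (fun t _ _ => by positivity)
          have h2 := tele m' M hm1
          have h3 : (1:ℝ)/(m':ℝ) ≤ 2 / T := by
            rw [div_le_div_iff₀ (by linarith) hT0]
            nlinarith
          linarith
  rw [hE, ← Finset.sum_filter_add_sum_filter_not (Finset.range M) (fun t => t + 1 ≤ m')]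
  have hfin : T * (2 * (A.card:ℝ) * M) + (2 * (K * (A.card:ℝ) * (M:ℝ)^2)) * (2/T)
      ≤ 6 * K ^ ((1:ℝ)/2) * (A.card:ℝ) * (M:ℝ) ^ ((3:ℝ)/2) := by
    have hsk : K ^ ((1:ℝ)/2) = Real.sqrt K := (Real.sqrt_eq_rpow K).symm
    have hsb : (M:ℝ) ^ ((3:ℝ)/2) = Real.sqrt (M:ℝ) ^ (3:ℕ) := by
      rw [show ((3:ℝ)/2) = (1/2) * ((3:ℕ):ℝ) by norm_num, Real.rpow_mul (by linarith),
        Real.rpow_natCast, ← Real.sqrt_eq_rpow]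
    have hTsk : T = Real.sqrt K * Real.sqrt (M:ℝ) := by
      rw [hT, Real.sqrt_mul hK0]
    have hsk2 : Real.sqrt K ^ 2 = K := Real.sq_sqrt hK0
    have hsb2 : Real.sqrt (M:ℝ) ^ 2 = (M:ℝ) := Real.sq_sqrt (by linarith)
    have hsk0 : 0 < Real.sqrt K := Real.sqrt_pos.mpr (by linarith)
    have hsb0 : 0 < Real.sqrt (M:ℝ) := Real.sqrt_pos.mpr (by linarith)
    have heq : T * (2 * (A.card:ℝ) * M) + (2 * (K * (A.card:ℝ) * (M:ℝ)^2)) * (2/T)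
        = 6 * Real.sqrt K * (A.card:ℝ) * Real.sqrt (M:ℝ) ^ (3:ℕ) := by
      rw [hTsk]
      have h := alg_final (A.card:ℝ) _ _ hsk0 hsb0
      rw [hsk2, hsb2] at h
      exact h
    rw [hsk, hsb, heq]
  exact le_trans (add_le_add hP1 hP2) hfin

theorem stmt_9 :
    ∃ C : ℝ, 0 < C ∧
      ∀ (A B : Finset ℝ) (K : ℝ), 1 ≤ K →
        (∀ (B' : Finset ℝ) (τ : ℝ), 1 ≤ τ →
          ({s : ℝ | τ ≤ ((A ∩ B'.image (fun b => b + s)).card : ℝ)}.ncard : ℝ) ≤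
            K * A.card * (B'.card : ℝ) ^ 2 / τ ^ 3) →
        (∑ s ∈ A - B, ((A ∩ B.image (fun b => b + s)).card : ℝ) ^ 2) ≤
          C * K ^ ((1 : ℝ) / 2) * A.card * (B.card : ℝ) ^ ((3 : ℝ) / 2) := by
  refine ⟨6, by norm_num, ?_⟩
  intro A B K hK hyp
  rcases B.eq_empty_or_nonempty with rfl | hBne
  · simp [Finset.sub_empty]
  · exact stmt_9' A B K hK hyp hBne
end
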